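/- arXiv:1501.03939 — 3 statements merged into one kernel-verified Lean document; each statement's English description precedes it below -/
import Mathlib

section
/- Let Ω = C(ℝ₊, ℝ^d) be the canonical space with Borel σ-field 𝓕, P a probability measure on (Ω, 𝓕), G ⊆ 𝓕 a sub-σ-algebra, and (P_ω)_{ω∈Ω} a regular conditional probability of P given G. Let E be a Polish space and ξ : Ω → E a random variable measurable with respect to G^P := G ∨ N^P. Then for P-almost every ω ∈ Ω, ξ is measurable with respect to G^{P_ω} := G ∨ N^{P_ω}, and P_ω(ξ = ξ(ω)) = 1. -/
open MeasureTheory ProbabilityTheory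
open scoped NNReal ENNReal symmDiff

noncomputable section

/-- The canonical space `Ω = C(ℝ₊, ℝ^d)` of continuous paths. -/
abbrev CanonSp (d : ℕ) := C(ℝ≥0, EuclideanSpace ℝ (Fin d))

/-- The Borel σ-field `𝓕` of the canonical space. -/
instance (d : ℕ) : MeasurableSpace (CanonSp d) := borel _
instance (d : ℕ) : BorelSpace (CanonSp d) := ⟨rfl⟩

/-- The Borel σ-field of the canonical space, named for explicit use. -/
abbrev canonBorel (d : ℕ) : MeasurableSpace (CanonSp d) := inferInstance

/-- The canonical (raw) filtration `F_s = σ(B_u, u ≤ s)` on the canonical space. -/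
def canonFil (d : ℕ) : Filtration ℝ≥0 (canonBorel d) where
  seq s := ⨆ u ∈ Set.Iic s, MeasurableSpace.comap (fun ω : CanonSp d => ω u) inferInstance
  mono' := fun s t hst => biSup_mono fun u (hu : u ≤ s) => hu.trans hst
  le' := fun _s => iSup₂_le fun u _ =>
    Measurable.comap_le (ContinuousEvalConst.continuous_eval_const u).measurable

/-- The σ-algebra generated by the collection `N^P` of `P`-negligible sets. -/
def nullSigma {α : Type*} {m : MeasurableSpace α} (P : @Measure α m) : MeasurableSpace α :=
  MeasurableSpace.generateFrom {A | ∃ N, MeasurableSet[m] N ∧ P N = 0 ∧ A ⊆ N}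

/-- `(P_w)_{w}` is a regular conditional probability of `P` given the
sub-σ-algebra `G` : each `P_w` is a probability measure, `w ↦ P_w(A)` is
`G`-measurable for each measurable `A`, and `P(A ∩ B) = ∫_B P_w(A) P(dw)`
for all measurable `A` and all `B ∈ G`. -/
def IsRCP {α : Type*} {m : MeasurableSpace α} (P : @Measure α m)
    (G : MeasurableSpace α) (Pw : α → @Measure α m) : Prop :=
  (∀ w, IsProbabilityMeasure (Pw w)) ∧
  (∀ A : Set α, MeasurableSet[m] A → Measurable[G] fun w => Pw w A) ∧
  (∀ A : Set α, MeasurableSet[m] A → ∀ B : Set α, MeasurableSet[G] B →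
    P (A ∩ B) = ∫⁻ w in B, Pw w A ∂P)

theorem my_mem_sup_null {α : Type*} {m : MeasurableSpace α} (P : @Measure α m)
    (G : MeasurableSpace α) {A : Set α}
    (hA : MeasurableSet[G ⊔ nullSigma P] A) :
    ∃ B, MeasurableSet[G] B ∧ P (A ∆ B) = 0 := by
  let m' : MeasurableSpace α :=
  { MeasurableSet' := fun A => ∃ B, MeasurableSet[G] B ∧ P (A ∆ B) = 0
    measurableSet_empty := ⟨∅, MeasurableSet.empty, by simp⟩
    measurableSet_compl := by
      rintro A ⟨B, hB, hAB⟩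
      exact ⟨Bᶜ, hB.compl, by rwa [compl_symmDiff_compl]⟩
    measurableSet_iUnion := by
      intro f hf
      choose B hB hBnull using hf
      refine ⟨⋃ i, B i, MeasurableSet.iUnion hB, ?_⟩
      have hsub : (⋃ i, f i) ∆ (⋃ i, B i) ⊆ ⋃ i, (f i ∆ B i) := by
        intro x hx
        rcases Set.mem_symmDiff.mp hx with ⟨hx1, hx2⟩ | ⟨hx1, hx2⟩
        · obtain ⟨i, hi⟩ := Set.mem_iUnion.mp hx1
          exact Set.mem_iUnion.mpr ⟨i, Set.mem_symmDiff.mpr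
            (Or.inl ⟨hi, fun h => hx2 (Set.mem_iUnion.mpr ⟨i, h⟩)⟩)⟩
        · obtain ⟨i, hi⟩ := Set.mem_iUnion.mp hx1
          exact Set.mem_iUnion.mpr ⟨i, Set.mem_symmDiff.mpr
            (Or.inr ⟨hi, fun h => hx2 (Set.mem_iUnion.mpr ⟨i, h⟩)⟩)⟩
      exact measure_mono_null hsub (measure_iUnion_null hBnull) }
  have hle : G ⊔ nullSigma P ≤ m' := by
    refine sup_le ?_ ?_
    · intro s hs
      exact ⟨s, hs, by simp⟩
    · refine MeasurableSpace.generateFrom_le ?_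
      rintro s ⟨N, hN, hN0, hsN⟩
      exact ⟨∅, @MeasurableSet.empty _ G, measure_mono_null (by simpa [Set.symmDiff_def] using hsN) hN0⟩
  exact hle A hA

theorem my_ereal_inf (r : ℝ) :
    ⨅ q : ℚ, (if r < (q : ℝ) then ((q : ℝ) : EReal) else ⊤) = (r : EReal) := by
  refine le_antisymm ?_ (le_iInf fun q => ?_)
  · by_contra h
    push_neg at h
    obtain ⟨q, hq1, hq2⟩ := EReal.exists_rat_btwn_of_lt h
    have h1 : (⨅ q : ℚ, (if r < (q : ℝ) then ((q : ℝ) : EReal) else ⊤)) ≤ ((q : ℝ) : EReal) := by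
      refine iInf_le_of_le q ?_
      rw [if_pos (by exact_mod_cast EReal.coe_lt_coe_iff.mp hq1)]
    exact absurd (lt_of_le_of_lt h1 hq2) (lt_irrefl _)
  · split_ifs with h
    · exact EReal.coe_le_coe_iff.mpr h.le
    · exact le_top

theorem my_exists_mod {α E : Type*} {m : MeasurableSpace α} [Nonempty E]
    [MeasurableSpace E] [StandardBorelSpace E]
    (P : @Measure α m) (G : MeasurableSpace α) (hG : G ≤ m)
    {ξ : α → E} (hξ : Measurable[G ⊔ nullSigma P] ξ) :
    ∃ ξ' : α → E, Measurable[G] ξ' ∧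
      ∃ N, MeasurableSet[m] N ∧ P N = 0 ∧ {x | ξ x ≠ ξ' x} ⊆ N := by
  classical
  obtain ⟨g, hg⟩ := exists_measurableEmbedding_real E
  set f : α → ℝ := fun x => g (ξ x) with hfdef
  have hf : Measurable[G ⊔ nullSigma P] f := hg.measurable.comp hξ
  have hchoice : ∀ q : ℚ, ∃ B, MeasurableSet[G] B ∧ P ((f ⁻¹' Set.Iio (q : ℝ)) ∆ B) = 0 :=
    fun q => my_mem_sup_null P G (hf measurableSet_Iio)
  choose B hB hBnull using hchoice
  set N0 : Set α := ⋃ q : ℚ, ((f ⁻¹' Set.Iio (q : ℝ)) ∆ B q) with hN0def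
  have hN0 : P N0 = 0 := measure_iUnion_null hBnull
  set F : α → EReal := fun x => ⨅ q : ℚ, (B q).piecewise (fun _ => ((q : ℝ) : EReal))
      (fun _ => (⊤ : EReal)) x with hFdef
  have hF : Measurable[G] F := by
    refine Measurable.iInf (fun q => ?_)
    exact Measurable.piecewise (hB q) measurable_const measurable_const
  set f' : α → ℝ := fun x => (F x).toReal with hf'def
  have hf' : Measurable[G] f' := measurable_ereal_toReal.comp hF
  have hfix : ∀ x ∉ N0, F x = ((f x : ℝ) : EReal) ∧ f' x = f x := by
    intro x hx
    have hiff : ∀ q : ℚ, x ∈ B q ↔ f x < (q : ℝ) := by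
      intro q
      have : x ∉ (f ⁻¹' Set.Iio (q : ℝ)) ∆ B q := fun h => hx (Set.mem_iUnion.mpr ⟨q, h⟩)
      rw [Set.mem_symmDiff] at this
      push_neg at this
      constructor
      · intro h; exact this.2 h
      · intro h; exact this.1 h
    have hFx : F x = ((f x : ℝ) : EReal) := by
      rw [hFdef]
      simp only
      rw [← my_ereal_inf (f x)]
      congr 1
      ext q
      by_cases hq : x ∈ B q
      · rw [Set.piecewise_eq_of_mem _ _ _ hq, if_pos ((hiff q).mp hq)]
      · rw [Set.piecewise_eq_of_notMem _ _ _ hq, if_neg (fun h => hq ((hiff q).mpr h))]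
    exact ⟨hFx, by rw [hf'def]; simp only; rw [hFx, EReal.toReal_coe]⟩
  set S : Set ℝ := Set.range g with hSdef
  have hS : MeasurableSet S := hg.measurableSet_range
  set e₀ : E := Classical.arbitrary E with he₀
  set f'' : α → ℝ := (f' ⁻¹' S).piecewise f' (fun _ => g e₀) with hf''def
  have hf'' : Measurable[G] f'' := Measurable.piecewise (hf' hS) hf' measurable_const
  have hrange : ∀ x, f'' x ∈ S := by
    intro x
    rw [hf''def]
    by_cases hx : x ∈ f' ⁻¹' S
    · rw [Set.piecewise_eq_of_mem _ _ _ hx]; exact hx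
    · rw [Set.piecewise_eq_of_notMem _ _ _ hx]; exact Set.mem_range_self e₀
  set ξ' : α → E := fun x => Function.invFun g (f'' x) with hξ'def
  have hlinv : ∀ e : E, Function.invFun g (g e) = e :=
    fun e => Function.leftInverse_invFun hg.injective e
  have hξ'meas : Measurable[G] ξ' := by
    intro V hV
    have : ξ' ⁻¹' V = f'' ⁻¹' (g '' V) := by
      ext x
      simp only [Set.mem_preimage, hξ'def]
      obtain ⟨e, he⟩ := hrange x
      constructor
      · intro h
        rw [← he, hlinv] at h
        exact ⟨e, h, he⟩
      · rintro ⟨e', he', hee'⟩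
        rw [← hee', hlinv]; exact he'
    rw [this]
    exact hf'' (hg.measurableSet_image.mpr hV)
  have hmod : {x | ξ x ≠ ξ' x} ⊆ N0 := by
    intro x hx
    by_contra hxN
    apply hx
    have h1 : f' x = f x := (hfix x hxN).2
    have h2 : f'' x = g (ξ x) := by
      have hmem : x ∈ f' ⁻¹' S := by
        rw [Set.mem_preimage, h1]; exact ⟨ξ x, rfl⟩
      rw [hf''def, Set.piecewise_eq_of_mem _ _ _ hmem, h1]
    rw [hξ'def]
    simp only
    rw [h2, hlinv]
  obtain ⟨N, hN0N, hNmeas, hNnull⟩ := @exists_measurable_superset_of_null α m P N0 hN0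
  exact ⟨ξ', hξ'meas, N, hNmeas, hNnull, hmod.trans hN0N⟩

theorem my_rcp_indicator {α : Type*} {m : MeasurableSpace α} (P : @Measure α m)
    [IsProbabilityMeasure P] (G : MeasurableSpace α) (hG : G ≤ m)
    (Pw : α → @Measure α m) (hPw : IsRCP P G Pw)
    {A : Set α} (hA : MeasurableSet[G] A) :
    ∀ᵐ w ∂P, Pw w A = A.indicator (fun _ => (1 : ℝ≥0∞)) w := by
  set f : α → ℝ≥0∞ := fun w => Pw w A with hfdef
  set g : α → ℝ≥0∞ := A.indicator (fun _ => (1 : ℝ≥0∞)) with hgdef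
  have hf : Measurable[G] f := hPw.2.1 A (hG A hA)
  have hg : Measurable[G] g := measurable_const.indicator hA
  have htrim : IsFiniteMeasure (P.trim hG) := by
    constructor
    rw [trim_measurableSet_eq hG MeasurableSet.univ]
    exact measure_lt_top P _
  have key : f =ᶠ[ae (P.trim hG)] g := by
    refine ae_eq_of_forall_setLIntegral_eq_of_sigmaFinite hf hg ?_
    intro s hs _
    have h1 : ∫⁻ x in s, f x ∂(P.trim hG) = ∫⁻ x in s, f x ∂P := by
      rw [MeasureTheory.restrict_trim hG P hs, lintegral_trim hG hf]
    have h2 : ∫⁻ x in s, g x ∂(P.trim hG) = ∫⁻ x in s, g x ∂P := by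
      rw [MeasureTheory.restrict_trim hG P hs, lintegral_trim hG hg]
    have h3 : ∫⁻ x in s, g x ∂P = P (A ∩ s) := by
      rw [hgdef]
      have := lintegral_indicator_one (μ := P.restrict s) (hG A hA)
      rw [show (A.indicator fun _ => (1:ℝ≥0∞)) = A.indicator 1 from rfl, this,
        Measure.restrict_apply (hG A hA)]
    rw [h1, h2, h3, ← hPw.2.2 A (hG A hA) s hs]
  exact ae_eq_of_ae_eq_trim key

/-- On the canonical space, let `(P_ω)` be an r.c.p. of `P` given a
sub-σ-algebra `G ⊆ 𝓕`, and let `ξ` be a `G^P := G ∨ N^P`-measurable random variable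
with Polish target. Then for `P`-a.e. `ω`, `ξ` is `G^{P_ω} := G ∨ N^{P_ω}`-measurable
and `P_ω(ξ = ξ(ω)) = 1`. -/
theorem rcp_measurable_and_eq_ae {d : ℕ} (P : Measure (CanonSp d))
    [IsProbabilityMeasure P] (Pw : CanonSp d → Measure (CanonSp d))
    {E : Type*} [MeasurableSpace E] [TopologicalSpace E] [PolishSpace E] [BorelSpace E]
    (ξ : CanonSp d → E)
    (G : MeasurableSpace (CanonSp d)) (hG : G ≤ canonBorel d)
    (hPw : IsRCP P G Pw)
    (hξ : Measurable[G ⊔ nullSigma P] ξ) :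
    ∀ᵐ w ∂P,
      Measurable[G ⊔ nullSigma (Pw w)] ξ ∧ Pw w {ω' | ξ ω' = ξ w} = 1 := by
  classical
  have hΩne : Nonempty (CanonSp d) := ⟨ContinuousMap.const _ 0⟩
  have hEne : Nonempty E := hΩne.map ξ
  obtain ⟨ξ', hξ', N, hN, hNnull, hmod⟩ := my_exists_mod P G hG hξ
  obtain ⟨b, hbc, -, hbB⟩ := TopologicalSpace.exists_countable_basis E
  have hpre : ∀ s : Set E, MeasurableSet s → MeasurableSet[canonBorel d] (ξ' ⁻¹' s) :=
    fun s hs => hG _ (hξ' hs)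
  have h1 : ∀ᵐ w ∂P, Pw w N = 0 := by
    have hdis := hPw.2.2 N hN Set.univ MeasurableSet.univ
    rw [Set.inter_univ, hNnull, setLIntegral_univ] at hdis
    have hmeas : Measurable[canonBorel d] fun w => Pw w N :=
      Measurable.mono (hPw.2.1 N hN) hG le_rfl
    exact (lintegral_eq_zero_iff hmeas).mp hdis.symm
  have h2 : ∀ᵐ w ∂P, w ∉ N := measure_eq_zero_iff_ae_notMem.mp hNnull
  have h3 : ∀ᵐ w ∂P, ∀ s ∈ b,
      Pw w (ξ' ⁻¹' s) = (ξ' ⁻¹' s).indicator (fun _ => (1 : ℝ≥0∞)) w := by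
    rw [ae_ball_iff hbc]
    intro s hs
    exact my_rcp_indicator P G hG Pw hPw (hξ' (hbB.isOpen hs).measurableSet)
  filter_upwards [h1, h2, h3] with w hw1 hw2 hw3
  haveI hPwprob : IsProbabilityMeasure (Pw w) := hPw.1 w
  have hsubNull : ∀ D : Set (CanonSp d), D ⊆ N → MeasurableSet[nullSigma (Pw w)] D :=
    fun D hD => MeasurableSpace.measurableSet_generateFrom ⟨N, hN, hw1, hD⟩
  have hagree : ∀ x ∉ N, ξ x = ξ' x := by
    intro x hx
    by_contra hne
    exact hx (hmod hne)
  constructor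
  · -- measurability
    intro V hV
    have key : ξ ⁻¹' V = ((ξ' ⁻¹' V) \ ((ξ' ⁻¹' V) ∩ N)) ∪ ((ξ ⁻¹' V) ∩ N) := by
      ext x
      by_cases hx : x ∈ N
      · simp only [Set.mem_union, Set.mem_diff, Set.mem_inter_iff, Set.mem_preimage]
        tauto
      · have := hagree x hx
        simp only [Set.mem_union, Set.mem_diff, Set.mem_inter_iff, Set.mem_preimage, this]
        tauto
    rw [key]
    have hm1 : MeasurableSet[G ⊔ nullSigma (Pw w)] (ξ' ⁻¹' V) :=
      (le_sup_left : G ≤ G ⊔ nullSigma (Pw w)) _ (hξ' hV)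
    have hm2 : MeasurableSet[G ⊔ nullSigma (Pw w)] ((ξ' ⁻¹' V) ∩ N) :=
      (le_sup_right : nullSigma (Pw w) ≤ G ⊔ nullSigma (Pw w)) _
        (hsubNull _ Set.inter_subset_right)
    have hm3 : MeasurableSet[G ⊔ nullSigma (Pw w)] ((ξ ⁻¹' V) ∩ N) :=
      (le_sup_right : nullSigma (Pw w) ≤ G ⊔ nullSigma (Pw w)) _
        (hsubNull _ Set.inter_subset_right)
    exact (hm1.diff hm2).union hm3
  · -- Pw w (ξ = ξ w) = 1
    set C : Set E → Set (CanonSp d) :=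
      fun s => if ξ' w ∈ s then ξ' ⁻¹' s else (ξ' ⁻¹' s)ᶜ with hCdef
    have hCpos : ∀ s, ξ' w ∈ s → C s = ξ' ⁻¹' s := by
      intro s h; simp only [hCdef, if_pos h]
    have hCneg : ∀ s, ξ' w ∉ s → C s = (ξ' ⁻¹' s)ᶜ := by
      intro s h; simp only [hCdef, if_neg h]
    have hCmeas : ∀ s ∈ b, MeasurableSet[canonBorel d] (C s) := by
      intro s hs
      have hbase := hpre s (hbB.isOpen hs).measurableSet
      by_cases h : ξ' w ∈ s
      · rw [hCpos s h]; exact hbase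
      · rw [hCneg s h]; exact hbase.compl
    have hC1 : ∀ s ∈ b, Pw w (C s) = 1 := by
      intro s hs
      have hind := hw3 s hs
      have hbase := hpre s (hbB.isOpen hs).measurableSet
      by_cases h : ξ' w ∈ s
      · rw [hCpos s h, hind, Set.indicator_of_mem (show w ∈ ξ' ⁻¹' s from h)]
      · rw [hCneg s h]
        refine (prob_compl_eq_one_iff hbase).mpr ?_
        rw [hind, Set.indicator_of_notMem (show w ∉ ξ' ⁻¹' s from h)]
    set K : Set (CanonSp d) := (⋂ s ∈ b, C s) \ N with hKdef
    have hKmeas : MeasurableSet[canonBorel d] K :=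
      (MeasurableSet.biInter hbc hCmeas).diff hN
    have hK1 : Pw w K = 1 := by
      have hcompl : Kᶜ = (⋃ s ∈ b, (C s)ᶜ) ∪ N := by
        rw [hKdef, Set.diff_eq, Set.compl_inter, compl_compl, Set.compl_iInter₂,
          Set.union_comm]
      refine (prob_compl_eq_zero_iff hKmeas).mp ?_
      rw [hcompl]
      refine measure_union_null ?_ hw1
      rw [measure_biUnion_null_iff hbc]
      intro s hs
      exact (prob_compl_eq_zero_iff (hCmeas s hs)).mpr (hC1 s hs)
    have hsub : K ⊆ {ω' | ξ ω' = ξ w} := by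
      intro x hx
      obtain ⟨hx1, hx2⟩ := hx
      have hxC : ∀ s ∈ b, x ∈ C s := fun s hs => Set.mem_iInter₂.mp hx1 s hs
      have hiff : ∀ s ∈ b, (ξ' x ∈ s ↔ ξ' w ∈ s) := by
        intro s hs
        have hthis := hxC s hs
        by_cases h : ξ' w ∈ s
        · rw [hCpos s h] at hthis; exact ⟨fun _ => h, fun _ => hthis⟩
        · rw [hCneg s h] at hthis; exact ⟨fun hh => absurd hh hthis, fun hh => absurd hh h⟩
      have heq : ξ' x = ξ' w := by
        refine Inseparable.eq (inseparable_iff_forall_isOpen.mpr ?_)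
        intro U hU
        constructor
        · intro hxU
          obtain ⟨v, hv, hxv, hvU⟩ := hbB.exists_subset_of_mem_open hxU hU
          exact hvU ((hiff v hv).mp hxv)
        · intro hwU
          obtain ⟨v, hv, hwv, hvU⟩ := hbB.exists_subset_of_mem_open hwU hU
          exact hvU ((hiff v hv).mpr hwv)
      show ξ x = ξ w
      rw [hagree x hx2, hagree w hw2, heq]
    refine le_antisymm prob_le_one ?_
    calc (1 : ℝ≥0∞) = Pw w K := hK1.symm
      _ ≤ Pw w {ω' | ξ ω' = ξ w} := measure_mono hsub
end
end

section
/- Let Ω = C(ℝ₊, ℝ^d) be the canonical space with Borel σ-field 𝓕, P a probability measure on (Ω, 𝓕), G ⊆ 𝓕 a sub-σ-algebra, and (P_ω)_{ω∈Ω} a regular conditional probability of P given G. Let ζ be a P-integrable random variable measurable with respect to 𝓕^P := 𝓕 ∨ N^P. Then for P-almost every ω ∈ Ω, ζ is measurable with respect to 𝓕^{P_ω} := 𝓕 ∨ N^{P_ω}, and the conditional expectation satisfies E^P[ζ | G ∨ N^P](ω) = ∫_Ω ζ(ω′) P_ω(dω′) for P-almost every ω. -/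
open MeasureTheory ProbabilityTheory
open scoped NNReal

noncomputable section

/-!
A set lies in `m ⊔ nullSigma P` iff it is `P`-a.e. equal to an `m`-measurable set, so `ζ` agrees
`P`-a.e. with a Borel function `g`. For `B ∈ G`, the defining identity `P(A ∩ B) = ∫_B P_w(A) dP`
says that composing the kernel `w ↦ P_w` with `P|_B` gives back `P|_B`. Hence a `P`-null set is
`P_w`-null for `P`-a.e. `w` (so `ζ = g` `P_w`-a.e.), and Fubini for the composition gives
`∫_B ∫ ζ dP_w dP = ∫_B ζ dP`. Finally `w ↦ ∫ g dP_w` is `G`-measurable, as an integral against a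
`G`-measurable kernel.
-/

section NullSigma

variable {α : Type*} {m0 : MeasurableSpace α} {P : Measure α}

theorem measurableSet_nullSigma_of_null {s : Set α} (hs : P s = 0) :
    MeasurableSet[nullSigma P] s :=
  MeasurableSpace.measurableSet_generateFrom
    ⟨toMeasurable P s, measurableSet_toMeasurable P s, by rwa [measure_toMeasurable],
      subset_toMeasurable P s⟩

theorem measurableSet_sup_nullSigma_iff {m : MeasurableSpace α} {s : Set α} :
    MeasurableSet[m ⊔ nullSigma P] s ↔ ∃ t, MeasurableSet[m] t ∧ s =ᵐ[P] t := by
  constructor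
  · intro hs
    rw [nullSigma, ← @MeasurableSpace.generateFrom_measurableSet α m,
      MeasurableSpace.generateFrom_sup_generateFrom] at hs
    induction s, hs using MeasurableSpace.generateFrom_induction with
    | hC s hs =>
      rcases hs with hs | ⟨N, -, hN, hsN⟩
      · exact ⟨s, hs, .rfl⟩
      · exact ⟨∅, .empty, ae_eq_empty.2 (measure_mono_null hsN hN)⟩
    | empty => exact ⟨∅, .empty, .rfl⟩
    | compl s _ ih =>
      obtain ⟨t, ht, hst⟩ := ih
      exact ⟨tᶜ, ht.compl, hst.compl⟩
    | iUnion s _ ih =>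
      choose t ht hst using ih
      exact ⟨⋃ i, t i, .iUnion ht, Filter.EventuallyEq.countable_iUnion hst⟩
  · rintro ⟨t, ht, hst⟩
    obtain ⟨hst, hts⟩ := ae_eq_set.1 hst
    have hnull {u : Set α} (hu : P u = 0) : MeasurableSet[m ⊔ nullSigma P] u :=
      le_sup_right (a := m) _ (measurableSet_nullSigma_of_null hu)
    -- `s = (t \ (t \ s)) ∪ (s \ t)` with both differences `P`-null
    rw [← Set.inter_union_sdiff s t, Set.inter_comm, ← Set.sdiff_sdiff_right_self]
    exact ((le_sup_left (b := nullSigma P) _ ht).diff (hnull hts)).union (hnull hst)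

theorem nullMeasurable_of_measurable_sup_nullSigma {β : Type*} [MeasurableSpace β] {f : α → β}
    (hf : Measurable[m0 ⊔ nullSigma P] f) : NullMeasurable f P := fun _ hs ↦ by
  obtain ⟨t, ht, hst⟩ := measurableSet_sup_nullSigma_iff.1 (hf hs)
  exact ht.nullMeasurableSet.congr hst.symm

theorem measurable_sup_nullSigma_of_ae_eq {β : Type*} [MeasurableSpace β] {m : MeasurableSpace α}
    {f g : α → β} (hg : Measurable[m] g) (hfg : f =ᵐ[P] g) : Measurable[m ⊔ nullSigma P] f :=
  fun s hs ↦ measurableSet_sup_nullSigma_iff.2 ⟨g ⁻¹' s, hg hs, hfg.preimage s⟩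

end NullSigma

namespace MeasureTheory.Measure

theorem integral_comp {α β E : Type*} {_ : MeasurableSpace α} {_ : MeasurableSpace β}
    [NormedAddCommGroup E] [NormedSpace ℝ E] {κ : Kernel α β} {μ : Measure α} {f : β → E}
    (hf : Integrable f (κ ∘ₘ μ)) : ∫ x, f x ∂(κ ∘ₘ μ) = ∫ a, ∫ x, f x ∂κ a ∂μ := by
  rw [comp_eq_comp_const_apply] at hf ⊢
  exact Kernel.integral_comp hf

end MeasureTheory.Measure

namespace IsRCP

variable {α : Type*} {G m0 : MeasurableSpace α} {P : Measure α} {Pw : α → Measure α}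

theorem measurable (hPw : IsRCP P G Pw) : Measurable[G] Pw :=
  Measure.measurable_of_measurable_coe _ hPw.2.1

def kernel (hPw : IsRCP P G Pw) (hG : G ≤ m0) : Kernel α α :=
  ⟨Pw, hPw.measurable.mono hG le_rfl⟩

theorem kernel_comp_restrict (hPw : IsRCP P G Pw) (hG : G ≤ m0) {B : Set α}
    (hB : MeasurableSet[G] B) : hPw.kernel hG ∘ₘ P.restrict B = P.restrict B := by
  ext A hA
  rw [Measure.bind_apply hA (Kernel.aemeasurable _), Measure.restrict_apply hA]
  exact (hPw.2.2 A hA B hB).symm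

theorem kernel_comp (hPw : IsRCP P G Pw) (hG : G ≤ m0) : hPw.kernel hG ∘ₘ P = P := by
  simpa using hPw.kernel_comp_restrict hG MeasurableSet.univ

theorem ae_ae_of_ae (hPw : IsRCP P G Pw) (hG : G ≤ m0) {p : α → Prop} (h : ∀ᵐ x ∂P, p x) :
    ∀ᵐ w ∂P, ∀ᵐ x ∂Pw w, p x := by
  rw [← hPw.kernel_comp hG] at h
  exact Measure.ae_ae_of_ae_comp h

variable {E : Type*} [NormedAddCommGroup E] [NormedSpace ℝ E]

theorem setIntegral_integral (hPw : IsRCP P G Pw) (hG : G ≤ m0) {f : α → E}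
    (hf : Integrable f P) {B : Set α} (hB : MeasurableSet[G] B) :
    ∫ w in B, ∫ x, f x ∂Pw w ∂P = ∫ x in B, f x ∂P := by
  have hcomp := hPw.kernel_comp_restrict hG hB
  have h := Measure.integral_comp (hcomp ▸ hf.restrict)
  rw [hcomp] at h
  exact h.symm

theorem stronglyMeasurable_integral (hPw : IsRCP P G Pw) {f : α → E}
    (hf : StronglyMeasurable f) : StronglyMeasurable[G] fun w ↦ ∫ x, f x ∂Pw w :=
  hf.integral_kernel (κ := @Kernel.mk α α G m0 Pw hPw.measurable)

end IsRCP

theorem rcp_condexp_general {d : ℕ} (P : Measure (CanonSp d))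
    (Pw : CanonSp d → Measure (CanonSp d))
    (ζ : CanonSp d → ℝ) (hζint : Integrable ζ P)
    (G : MeasurableSpace (CanonSp d)) (hG : G ≤ canonBorel d)
    (hPw : IsRCP P G Pw)
    (hζ : Measurable[canonBorel d ⊔ nullSigma P] ζ) :
    (∀ᵐ w ∂P, Measurable[canonBorel d ⊔ nullSigma (Pw w)] ζ) ∧
    Measurable[G ⊔ nullSigma P] (fun w => ∫ ω', ζ ω' ∂(Pw w)) ∧
    (∀ B : Set (CanonSp d), MeasurableSet[G ⊔ nullSigma P] B →
      ∫ w in B, (∫ ω', ζ ω' ∂(Pw w)) ∂P = ∫ w in B, ζ w ∂P) := by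
  have hζae : AEStronglyMeasurable[canonBorel d] ζ P :=
    (nullMeasurable_of_measurable_sup_nullSigma hζ).aemeasurable.aestronglyMeasurable
  have hζ_ae_w : ∀ᵐ w ∂P, ζ =ᵐ[Pw w] hζae.mk ζ := hPw.ae_ae_of_ae hG hζae.ae_eq_mk
  refine ⟨?_, ?_, fun B hB ↦ ?_⟩
  · filter_upwards [hζ_ae_w] with w hw
    exact measurable_sup_nullSigma_of_ae_eq hζae.stronglyMeasurable_mk.measurable hw
  · refine measurable_sup_nullSigma_of_ae_eq
      (hPw.stronglyMeasurable_integral hζae.stronglyMeasurable_mk).measurable ?_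
    filter_upwards [hζ_ae_w] with w hw using integral_congr_ae hw
  · obtain ⟨B', hB', hBB'⟩ := measurableSet_sup_nullSigma_iff.1 hB
    rw [setIntegral_congr_set hBB', setIntegral_congr_set hBB']
    exact hPw.setIntegral_integral hG hζint hB'

/-- On the canonical space, let `(P_ω)` be an r.c.p. of `P` given a
sub-σ-algebra `G ⊆ 𝓕`, and let `ζ` be a `P`-integrable, `𝓕^P := 𝓕 ∨ N^P`-measurable
real random variable. Then for `P`-a.e. `ω`, `ζ` is `𝓕^{P_ω} := 𝓕 ∨ N^{P_ω}`-measurable,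
and `ω ↦ ∫ ζ dP_ω` is a version of the conditional expectation `E^P[ζ | G ∨ N^P]`,
i.e. it is `G ∨ N^P`-measurable and has the same `P`-integral as `ζ` on every
`B ∈ G ∨ N^P`. -/
theorem rcp_condexp {d : ℕ} (P : Measure (CanonSp d))
    [IsProbabilityMeasure P] (Pw : CanonSp d → Measure (CanonSp d))
    (ζ : CanonSp d → ℝ) (hζint : Integrable ζ P)
    (G : MeasurableSpace (CanonSp d)) (hG : G ≤ canonBorel d)
    (hPw : IsRCP P G Pw)
    (hζ : Measurable[canonBorel d ⊔ nullSigma P] ζ) :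
    (∀ᵐ w ∂P, Measurable[canonBorel d ⊔ nullSigma (Pw w)] ζ) ∧
    Measurable[G ⊔ nullSigma P] (fun w => ∫ ω', ζ ω' ∂(Pw w)) ∧
    (∀ B : Set (CanonSp d), MeasurableSet[G ⊔ nullSigma P] B →
      ∫ w in B, (∫ ω', ζ ω' ∂(Pw w)) ∂P = ∫ w in B, ζ w ∂P) :=
  rcp_condexp_general P Pw ζ hζint G hG hPw hζ
end
end

section
/- Let Ω = C(ℝ₊, ℝ^d) be the canonical space with canonical filtration F and Borel σ-field 𝓕, let P be a probability measure on (Ω, 𝓕), G ⊆ 𝓕 a sub-σ-algebra, and (P_ω)_{ω∈Ω} a regular conditional probability of P given G. Let E be a Polish space and Y : ℝ₊ × Ω → E a process that is predictable with respect to the P-augmented filtration F^P. Then for P-almost every ω ∈ Ω, Y is predictable with respect to the P_ω-augmented filtration F^{P_ω}. -/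
open MeasureTheory ProbabilityTheory
open scoped NNReal symmDiff

noncomputable section

/-- The predictable σ-algebra on `ℝ₊ × α` associated with a filtration
`G = (G_s)`: it is generated by the sets `{0} × A` with `A ∈ G_0` and
`(u, v] × A` with `u < v` and `A ∈ G_u`. -/
def predictableSigma {α : Type*} (G : ℝ≥0 → MeasurableSpace α) :
    MeasurableSpace (ℝ≥0 × α) :=
  MeasurableSpace.generateFrom
    ({S | ∃ A : Set α, MeasurableSet[G 0] A ∧ S = ({0} : Set ℝ≥0) ×ˢ A} ∪
     {S | ∃ (u v : ℝ≥0) (A : Set α), u < v ∧ MeasurableSet[G u] A ∧ S = Set.Ioc u v ×ˢ A})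

section AuxLemmas

variable {α : Type*}

private lemma symmDiff_iUnion_subset' {ι : Sort*} (f g : ι → Set α) :
    (⋃ i, f i) ∆ (⋃ i, g i) ⊆ ⋃ i, f i ∆ g i := by
  intro x hx
  rw [Set.mem_symmDiff] at hx
  rcases hx with ⟨h1, h2⟩ | ⟨h1, h2⟩ <;>
    simp only [Set.mem_iUnion, not_exists] at h1 h2 ⊢ <;>
    obtain ⟨i, hi⟩ := h1
  · exact ⟨i, Set.mem_symmDiff.2 (Or.inl ⟨hi, h2 i⟩)⟩
  · exact ⟨i, Set.mem_symmDiff.2 (Or.inr ⟨hi, h2 i⟩)⟩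

private lemma eq_of_symmDiff_subset' {S S' R : Set α} (h : S ∆ S' ⊆ R) :
    S = (S' ∩ Rᶜ) ∪ (S ∩ R) := by
  ext x
  have hx := @h x
  simp only [Set.mem_symmDiff, Set.mem_union, Set.mem_inter_iff, Set.mem_compl_iff] at hx ⊢
  tauto

/-- Monotonicity of the predictable σ-algebra in the filtration. -/
private lemma predictableSigma_mono' {F H : ℝ≥0 → MeasurableSpace α}
    (h : ∀ s, F s ≤ H s) : predictableSigma F ≤ predictableSigma H := by
  apply MeasurableSpace.generateFrom_mono
  rintro S (⟨A, hA, rfl⟩ | ⟨u, v, A, huv, hA, rfl⟩)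
  · exact Or.inl ⟨A, h 0 A hA, rfl⟩
  · exact Or.inr ⟨u, v, A, huv, h u A hA, rfl⟩

/-- Every set in `m ⊔ N^P` agrees with a set of `m` outside a `P`-null set. -/
private lemma exists_approx' {m m₀ : MeasurableSpace α} (P : @Measure α m₀) {A : Set α}
    (hA : MeasurableSet[m ⊔ nullSigma P] A) :
    ∃ A' N : Set α, MeasurableSet[m] A' ∧ MeasurableSet[m₀] N ∧ P N = 0 ∧ A ∆ A' ⊆ N := by
  let t : MeasurableSpace α :=
    { MeasurableSet' := fun A => ∃ A' N : Set α,
        MeasurableSet[m] A' ∧ MeasurableSet[m₀] N ∧ P N = 0 ∧ A ∆ A' ⊆ N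
      measurableSet_empty := ⟨∅, ∅, @MeasurableSet.empty _ m, @MeasurableSet.empty _ m₀,
        measure_empty, by simp⟩
      measurableSet_compl := by
        rintro A ⟨A', N, h1, h2, h3, h4⟩
        exact ⟨A'ᶜ, N, h1.compl, h2, h3, by rwa [compl_symmDiff_compl]⟩
      measurableSet_iUnion := by
        intro f hf
        choose A' N h1 h2 h3 h4 using hf
        refine ⟨⋃ i, A' i, ⋃ i, N i, MeasurableSet.iUnion h1, MeasurableSet.iUnion h2,
          measure_iUnion_null h3, ?_⟩
        exact (symmDiff_iUnion_subset' f A').trans (Set.iUnion_mono h4) }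
  have hle : m ⊔ nullSigma P ≤ t := by
    refine sup_le ?_ ?_
    · intro A hA
      exact ⟨A, ∅, hA, @MeasurableSet.empty _ m₀, measure_empty, by simp⟩
    · refine MeasurableSpace.generateFrom_le ?_
      rintro A ⟨N, hN, hN0, hAN⟩
      refine ⟨∅, N, @MeasurableSet.empty _ m, hN, hN0, ?_⟩
      rw [show (∅ : Set α) = ⊥ from rfl, symmDiff_bot]
      exact hAN
  exact hle A hA

private lemma prod_symmDiff_subset' (s : Set ℝ≥0) (a b : Set α) :
    (s ×ˢ a) ∆ (s ×ˢ b) ⊆ (Set.univ : Set ℝ≥0) ×ˢ (a ∆ b) := by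
  rintro ⟨u, x⟩ hx
  rw [Set.mem_symmDiff] at hx
  simp only [Set.mem_prod, Set.mem_univ, true_and, not_and] at hx ⊢
  rw [Set.mem_symmDiff]
  rcases hx with ⟨⟨hs, ha⟩, hb⟩ | ⟨⟨hs, hb⟩, ha⟩
  · exact Or.inl ⟨ha, hb hs⟩
  · exact Or.inr ⟨hb, ha hs⟩

/-- Every predictable set for the `P`-augmented filtration agrees with a predictable
set for the raw filtration outside `ℝ₊ × N` for a `P`-null set `N`. -/
private lemma exists_approx_pred' {m₀ : MeasurableSpace α} (P : @Measure α m₀)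
    (F : ℝ≥0 → MeasurableSpace α) {S : Set (ℝ≥0 × α)}
    (hS : MeasurableSet[predictableSigma (fun s => F s ⊔ nullSigma P)] S) :
    ∃ (S' : Set (ℝ≥0 × α)) (N : Set α), MeasurableSet[predictableSigma F] S' ∧
      MeasurableSet[m₀] N ∧ P N = 0 ∧ S ∆ S' ⊆ (Set.univ : Set ℝ≥0) ×ˢ N := by
  let t : MeasurableSpace (ℝ≥0 × α) :=
    { MeasurableSet' := fun S => ∃ (S' : Set (ℝ≥0 × α)) (N : Set α),
        MeasurableSet[predictableSigma F] S' ∧ MeasurableSet[m₀] N ∧ P N = 0 ∧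
          S ∆ S' ⊆ (Set.univ : Set ℝ≥0) ×ˢ N
      measurableSet_empty := ⟨∅, ∅, @MeasurableSet.empty _ (predictableSigma F),
        @MeasurableSet.empty _ m₀, measure_empty, by simp⟩
      measurableSet_compl := by
        rintro S ⟨S', N, h1, h2, h3, h4⟩
        exact ⟨S'ᶜ, N, h1.compl, h2, h3, by rwa [compl_symmDiff_compl]⟩
      measurableSet_iUnion := by
        intro f hf
        choose S' N h1 h2 h3 h4 using hf
        refine ⟨⋃ i, S' i, ⋃ i, N i, MeasurableSet.iUnion h1, MeasurableSet.iUnion h2,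
          measure_iUnion_null h3, (symmDiff_iUnion_subset' f S').trans ?_⟩
        refine (Set.iUnion_mono h4).trans ?_
        rintro ⟨u, x⟩ hx
        simp only [Set.mem_iUnion, Set.mem_prod, Set.mem_univ, true_and] at hx ⊢
        obtain ⟨i, hi⟩ := hx
        exact ⟨i, hi⟩ }
  have hle : predictableSigma (fun s => F s ⊔ nullSigma P) ≤ t := by
    rw [predictableSigma]
    refine MeasurableSpace.generateFrom_le ?_
    rintro S (⟨A, hA, rfl⟩ | ⟨u, v, A, huv, hA, rfl⟩)
    · obtain ⟨A', N, h1, h2, h3, h4⟩ := exists_approx' P hA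
      refine ⟨({0} : Set ℝ≥0) ×ˢ A', N, ?_, h2, h3, ?_⟩
      · exact MeasurableSpace.measurableSet_generateFrom (Or.inl ⟨A', h1, rfl⟩)
      · exact (prod_symmDiff_subset' _ _ _).trans (Set.prod_mono_right h4)
    · obtain ⟨A', N, h1, h2, h3, h4⟩ := exists_approx' P hA
      refine ⟨Set.Ioc u v ×ˢ A', N, ?_, h2, h3, ?_⟩
      · exact MeasurableSpace.measurableSet_generateFrom (Or.inr ⟨u, v, A', huv, h1, rfl⟩)
      · exact (prod_symmDiff_subset' _ _ _).trans (Set.prod_mono_right h4)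
  exact hle S hS

/-- `ℝ₊ × N` is predictable for the `ν`-augmented filtration when `ν N = 0`. -/
private lemma prod_null_mem' {m₀ : MeasurableSpace α} (ν : @Measure α m₀)
    (F : ℝ≥0 → MeasurableSpace α) {N : Set α} (hNm : MeasurableSet[m₀] N) (hN0 : ν N = 0) :
    MeasurableSet[predictableSigma (fun s => F s ⊔ nullSigma ν)]
      ((Set.univ : Set ℝ≥0) ×ˢ N) := by
  have hNs : ∀ u, MeasurableSet[F u ⊔ nullSigma ν] N := fun u =>
    (le_sup_right : nullSigma ν ≤ F u ⊔ nullSigma ν) N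
      (MeasurableSpace.measurableSet_generateFrom ⟨N, hNm, hN0, subset_rfl⟩)
  have hcover : (Set.univ : Set ℝ≥0) ×ˢ N =
      ⋃ n : ℕ, (({0} : Set ℝ≥0) ×ˢ N ∪ Set.Ioc (0 : ℝ≥0) (n + 1) ×ˢ N) := by
    ext ⟨u, x⟩
    simp only [Set.mem_prod, Set.mem_univ, true_and, Set.mem_iUnion, Set.mem_union,
      Set.mem_singleton_iff, Set.mem_Ioc]
    constructor
    · intro hx
      rcases eq_or_ne u 0 with h0 | h0
      · exact ⟨0, Or.inl ⟨h0, hx⟩⟩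
      · refine ⟨⌈(u : ℝ≥0)⌉₊, Or.inr ⟨⟨pos_iff_ne_zero.mpr h0, ?_⟩, hx⟩⟩
        exact (Nat.le_ceil u).trans (by exact_mod_cast le_self_add)
    · rintro ⟨n, ⟨h, hx⟩ | ⟨h, hx⟩⟩ <;> exact hx
  rw [hcover]
  refine MeasurableSet.iUnion fun n => MeasurableSet.union ?_ ?_
  · exact MeasurableSpace.measurableSet_generateFrom (Or.inl ⟨N, hNs 0, rfl⟩)
  · exact MeasurableSpace.measurableSet_generateFrom
      (Or.inr ⟨0, n + 1, N, by positivity, hNs 0, rfl⟩)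

/-- The trace on `ℝ₊ × N` of a predictable set for the `P`-augmented filtration is
predictable for the `ν`-augmented filtration whenever `ν N = 0`. -/
private lemma inter_prod_null' {m₀ : MeasurableSpace α} (P ν : @Measure α m₀)
    (F : ℝ≥0 → MeasurableSpace α) {N : Set α} (hNm : MeasurableSet[m₀] N) (hN0 : ν N = 0)
    {S : Set (ℝ≥0 × α)}
    (hS : MeasurableSet[predictableSigma (fun s => F s ⊔ nullSigma P)] S) :
    MeasurableSet[predictableSigma (fun s => F s ⊔ nullSigma ν)]
      (S ∩ (Set.univ : Set ℝ≥0) ×ˢ N) := by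
  set m' := predictableSigma (fun s => F s ⊔ nullSigma ν) with hm'
  have hR : MeasurableSet[m'] ((Set.univ : Set ℝ≥0) ×ˢ N) := prod_null_mem' ν F hNm hN0
  have hsub : ∀ A : Set α, ∀ u, MeasurableSet[F u ⊔ nullSigma ν] (A ∩ N) := fun A u =>
    (le_sup_right : nullSigma ν ≤ F u ⊔ nullSigma ν) _
      (MeasurableSpace.measurableSet_generateFrom ⟨N, hNm, hN0, Set.inter_subset_right⟩)
  let t : MeasurableSpace (ℝ≥0 × α) :=
    { MeasurableSet' := fun S => MeasurableSet[m'] (S ∩ (Set.univ : Set ℝ≥0) ×ˢ N)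
      measurableSet_empty := by
        show MeasurableSet[m'] ((∅ : Set (ℝ≥0 × α)) ∩ (Set.univ : Set ℝ≥0) ×ˢ N)
        rw [Set.empty_inter]
        exact @MeasurableSet.empty _ m'
      measurableSet_compl := by
        intro S hS
        have heq : Sᶜ ∩ (Set.univ : Set ℝ≥0) ×ˢ N =
            ((Set.univ : Set ℝ≥0) ×ˢ N) \ (S ∩ (Set.univ : Set ℝ≥0) ×ˢ N) := by
          ext x; simp only [Set.mem_inter_iff, Set.mem_compl_iff, Set.mem_diff]; tauto
        rw [heq]
        exact hR.diff hS
      measurableSet_iUnion := by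
        intro f hf
        rw [Set.iUnion_inter]
        exact MeasurableSet.iUnion hf }
  have hle : predictableSigma (fun s => F s ⊔ nullSigma P) ≤ t := by
    rw [predictableSigma]
    refine MeasurableSpace.generateFrom_le ?_
    rintro S (⟨A, hA, rfl⟩ | ⟨u, v, A, huv, hA, rfl⟩)
    · show MeasurableSet[m'] _
      rw [Set.prod_inter_prod]
      exact MeasurableSpace.measurableSet_generateFrom
        (Or.inl ⟨A ∩ N, hsub A 0, by rw [Set.inter_univ]⟩)
    · show MeasurableSet[m'] _
      rw [Set.prod_inter_prod]
      exact MeasurableSpace.measurableSet_generateFrom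
        (Or.inr ⟨u, v, A ∩ N, huv, hsub A u, by rw [Set.inter_univ]⟩)
  exact hle S hS

/-- For an r.c.p., a `P`-null set is `P_w`-null for `P`-a.e. `w`. -/
private lemma rcp_null' {m : MeasurableSpace α} (P : @Measure α m)
    (G : MeasurableSpace α) (hG : G ≤ m) (Pw : α → @Measure α m) (hPw : IsRCP P G Pw)
    {N : Set α} (hNm : MeasurableSet[m] N) (hN0 : P N = 0) :
    ∀ᵐ w ∂P, Pw w N = 0 := by
  have hmeas : Measurable[m] fun w => Pw w N :=
    ((hPw.2.1 N hNm).mono hG le_rfl : Measurable[m] _)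
  have h := hPw.2.2 N hNm Set.univ (@MeasurableSet.univ _ G)
  rw [Set.inter_univ, Measure.restrict_univ] at h
  have h0 : ∫⁻ w, Pw w N ∂P = 0 := h ▸ hN0
  filter_upwards [(lintegral_eq_zero_iff (μ := P) hmeas).mp h0] with w hw using hw

end AuxLemmas


/-- On the canonical space with canonical filtration `F`, let `(P_ω)`
be an r.c.p. of `P` given a sub-σ-algebra `G ⊆ 𝓕`, `E` a Polish space, and
`Y : ℝ₊ × Ω → E` a process which is predictable for the `P`-augmented filtration
`F^P`. Then for `P`-a.e. `ω`, `Y` is predictable for the `P_ω`-augmented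
filtration `F^{P_ω}`. -/
theorem rcp_predictable {d : ℕ} (P : Measure (CanonSp d))
    [IsProbabilityMeasure P] (Pw : CanonSp d → Measure (CanonSp d))
    {E : Type*} [MeasurableSpace E] [TopologicalSpace E] [PolishSpace E] [BorelSpace E]
    (Y : ℝ≥0 → CanonSp d → E)
    (G : MeasurableSpace (CanonSp d)) (hG : G ≤ canonBorel d)
    (hPw : IsRCP P G Pw)
    (hY : Measurable[predictableSigma (fun s => canonFil d s ⊔ nullSigma P)]
      (fun p : ℝ≥0 × CanonSp d => Y p.1 p.2)) :
    ∀ᵐ w ∂P,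
      Measurable[predictableSigma (fun s => canonFil d s ⊔ nullSigma (Pw w))]
        (fun p : ℝ≥0 × CanonSp d => Y p.1 p.2) := by
  obtain ⟨b, hbc, -, hbt⟩ := TopologicalSpace.exists_countable_basis E
  have hSB : ∀ B ∈ b, MeasurableSet[predictableSigma (fun s => canonFil d s ⊔ nullSigma P)]
      ((fun p : ℝ≥0 × CanonSp d => Y p.1 p.2) ⁻¹' B) :=
    fun B hB => hY (hbt.isOpen hB).measurableSet
  have happ : ∀ B ∈ b, ∃ (S' : Set (ℝ≥0 × CanonSp d)) (N : Set (CanonSp d)),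
      MeasurableSet[predictableSigma (fun s => (canonFil d s : MeasurableSpace (CanonSp d)))] S' ∧
      MeasurableSet[canonBorel d] N ∧ P N = 0 ∧
      ((fun p : ℝ≥0 × CanonSp d => Y p.1 p.2) ⁻¹' B) ∆ S' ⊆ (Set.univ : Set ℝ≥0) ×ˢ N :=
    fun B hB => exists_approx_pred' P _ (hSB B hB)
  choose! S' N hS' hNm hN0 hsubB using happ
  set N0 : Set (CanonSp d) := ⋃ B ∈ b, N B with hN0def
  have hN0m : MeasurableSet[canonBorel d] N0 := MeasurableSet.biUnion hbc hNm
  have hN00 : P N0 = 0 := (measure_biUnion_null_iff hbc).mpr hN0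
  filter_upwards [rcp_null' P G hG Pw hPw hN0m hN00] with w hw
  refine Measurable.mono
    (@measurable_generateFrom (ℝ≥0 × CanonSp d) E
      (predictableSigma (fun s => canonFil d s ⊔ nullSigma (Pw w))) b _ fun B hB => ?_) le_rfl
    ((BorelSpace.measurable_eq (α := E)).trans hbt.borel_eq_generateFrom).le
  set m' := predictableSigma (fun s => canonFil d s ⊔ nullSigma (Pw w)) with hm'
  have hR : MeasurableSet[m'] ((Set.univ : Set ℝ≥0) ×ˢ N0) :=
    prod_null_mem' (Pw w) (fun s => canonFil d s) hN0m hw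
  have hsub : ((fun p : ℝ≥0 × CanonSp d => Y p.1 p.2) ⁻¹' B) ∆ S' B ⊆
      (Set.univ : Set ℝ≥0) ×ˢ N0 := by
    refine (hsubB B hB).trans (Set.prod_mono_right ?_)
    exact Set.subset_biUnion_of_mem hB
  rw [eq_of_symmDiff_subset' hsub]
  refine MeasurableSet.union ?_ ?_
  · refine MeasurableSet.inter ?_ hR.compl
    exact predictableSigma_mono' (fun s => le_sup_left) _ (hS' B hB)
  · exact inter_prod_null' P (Pw w) (fun s => canonFil d s) hN0m hw (hSB B hB)
end
end
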